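/- Let φ_E be a d × d kernel of nonnegative functions on ℝ≥0, zero in the E^c columns, with entries φ^{ij} = α^{ij} f^{ij} where f^{ij} ≥ 0 and ∫ f^{ij} = 1. If the spectral radius of the e × e submatrix α^{EE} is strictly less than 1, then for every (i,j), the series Σ_{n=1}^∞ ‖(φ_E^{⊗n})^{ij}‖₁ converges; hence Σ_{n=1}^∞ φ_E^{⊗n} converges entrywise in L¹(ℝ≥0). -/

import Mathlib

open MeasureTheory Matrix Filter

noncomputable def L1norm (f : ℝ → ℝ) : ℝ := ∫ t in Set.Ioi (0:ℝ), |f t|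

noncomputable def conv (f g : ℝ → ℝ) : ℝ → ℝ := fun t => ∫ s in (0:ℝ)..t, f (t - s) * g s

noncomputable def mconv {ι κ σ : Type*} [Fintype κ] (φ : Matrix ι κ (ℝ → ℝ))
    (ψ : Matrix κ σ (ℝ → ℝ)) : Matrix ι σ (ℝ → ℝ) :=
  Matrix.of fun i j t => ∑ k, ∫ s in (0:ℝ)..t, φ i k (t - s) * ψ k j s

noncomputable def mconvPow {ι : Type*} [Fintype ι] (φ : Matrix ι ι (ℝ → ℝ)) : ℕ → Matrix ι ι (ℝ → ℝ)
  | 0 => φ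
  | n + 1 => mconv φ (mconvPow φ n)

noncomputable def specRad {ι : Type*} [Fintype ι] [DecidableEq ι] (A : Matrix ι ι ℝ) : ℝ :=
  sSup ((fun z : ℂ => ‖z‖) '' spectrum ℂ (A.map Complex.ofReal))

noncomputable def specRadC {ι : Type*} [Fintype ι] [DecidableEq ι] (A : Matrix ι ι ℂ) : ℝ :=
  sSup ((fun z : ℂ => ‖z‖) '' spectrum ℂ A)


/-!
Young's inequality on the half-line, `L1norm (conv f g) ≤ L1norm f * L1norm g`, bounds the
entries of the convolution powers by those of the powers of the mass matrix
`M = φE.map L1norm`, i.e. `α` with its `Eᶜ` columns replaced by zero: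
`L1norm (mconvPow φE n i j) ≤ (M ^ (n + 1)) i j`, where `mconvPow φ n` is the `(n + 1)`-fold
power. As the `Eᶜ` columns of `M` vanish, `M ^ (n + 1) = M.toCols₁ * (α^{EE}) ^ n * fromCols 1 0`,
and Gelfand's formula turns `ρ(α^{EE}) < 1` into summability of `‖(α^{EE}) ^ n‖`. Summable `L¹`
norms make the series converge in the complete space `L¹`.
-/

open Set
open scoped Topology

lemma conv_eqOn_posConvolution (f g : ℝ → ℝ) :
    EqOn (conv f g) (posConvolution g f (ContinuousLinearMap.mul ℝ ℝ).flip) (Ioi 0) := by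
  intro t ht
  simp [conv, posConvolution, indicator_of_mem ht, mul_comm]

section HalfLineConvolution

variable {f g : ℝ → ℝ}

lemma integrableOn_conv (hf : IntegrableOn f (Ioi 0)) (hg : IntegrableOn g (Ioi 0)) :
    IntegrableOn (conv f g) (Ioi 0) :=
  ((integrable_posConvolution hg hf _).integrableOn).congr_fun
    (conv_eqOn_posConvolution f g).symm measurableSet_Ioi

lemma abs_conv_le {t : ℝ} (ht : 0 ≤ t) : |conv f g t| ≤ conv (|f ·|) (|g ·|) t := by
  refine (intervalIntegral.abs_integral_le_integral_abs ht).trans_eq ?_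
  simp only [conv, abs_mul]

lemma L1norm_nonneg (h : ℝ → ℝ) : 0 ≤ L1norm h :=
  setIntegral_nonneg measurableSet_Ioi fun _ _ => abs_nonneg _

lemma L1norm_conv_le (hf : IntegrableOn f (Ioi 0)) (hg : IntegrableOn g (Ioi 0)) :
    L1norm (conv f g) ≤ L1norm f * L1norm g := by
  have key := integral_posConvolution hg.abs hf.abs (ContinuousLinearMap.mul ℝ ℝ).flip
  simp only [ContinuousLinearMap.flip_apply, ContinuousLinearMap.mul_apply'] at key
  calc L1norm (conv f g) ≤ ∫ t in Ioi 0, conv (|f ·|) (|g ·|) t :=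
        setIntegral_mono_on (integrableOn_conv hf hg).abs (integrableOn_conv hf.abs hg.abs)
          measurableSet_Ioi fun t ht => abs_conv_le ht.le
    _ = L1norm f * L1norm g := key

end HalfLineConvolution

lemma L1norm_sum_le {κ : Type*} (s : Finset κ) {h : κ → ℝ → ℝ}
    (hh : ∀ k ∈ s, IntegrableOn (h k) (Ioi 0)) :
    L1norm (fun t => ∑ k ∈ s, h k t) ≤ ∑ k ∈ s, L1norm (h k) := by
  calc L1norm (fun t => ∑ k ∈ s, h k t) ≤ ∫ t in Ioi 0, ∑ k ∈ s, |h k t| :=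
        setIntegral_mono_on (integrable_finsetSum s hh).abs
          (integrable_finsetSum s fun k hk => (hh k hk).abs) measurableSet_Ioi
          fun t _ => Finset.abs_sum_le_sum_abs _ _
    _ = ∑ k ∈ s, L1norm (h k) := integral_finsetSum s fun k hk => (hh k hk).abs

section MatrixConvolution

variable {ι κ σ : Type*} [Fintype κ] {φ : Matrix ι κ (ℝ → ℝ)} {ψ : Matrix κ σ (ℝ → ℝ)}

lemma integrableOn_mconv (hφ : ∀ i k, IntegrableOn (φ i k) (Ioi 0))
    (hψ : ∀ k j, IntegrableOn (ψ k j) (Ioi 0)) (i : ι) (j : σ) :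
    IntegrableOn (mconv φ ψ i j) (Ioi 0) :=
  integrable_finsetSum _ fun k _ => integrableOn_conv (hφ i k) (hψ k j)

lemma L1norm_mconv_le (hφ : ∀ i k, IntegrableOn (φ i k) (Ioi 0))
    (hψ : ∀ k j, IntegrableOn (ψ k j) (Ioi 0)) (i : ι) (j : σ) :
    L1norm (mconv φ ψ i j) ≤ (φ.map L1norm * ψ.map L1norm) i j :=
  (L1norm_sum_le _ fun k _ => integrableOn_conv (hφ i k) (hψ k j)).trans
    (Finset.sum_le_sum fun k _ => L1norm_conv_le (hφ i k) (hψ k j))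

end MatrixConvolution

section MatrixConvolutionPower

variable {ι : Type*} [Fintype ι] {φ : Matrix ι ι (ℝ → ℝ)}

lemma integrableOn_mconvPow (hφ : ∀ i j, IntegrableOn (φ i j) (Ioi 0)) :
    ∀ n i j, IntegrableOn (mconvPow φ n i j) (Ioi 0)
  | 0 => hφ
  | n + 1 => integrableOn_mconv hφ (integrableOn_mconvPow hφ n)

lemma L1norm_mconvPow_le [DecidableEq ι] (hφ : ∀ i j, IntegrableOn (φ i j) (Ioi 0)) :
    ∀ n i j, L1norm (mconvPow φ n i j) ≤ (φ.map L1norm ^ (n + 1)) i j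
  | 0, i, j => by simp [mconvPow]
  | n + 1, i, j => by
    refine (L1norm_mconv_le hφ (integrableOn_mconvPow hφ n) i j).trans ?_
    rw [pow_succ' _ (n + 1)]
    exact Finset.sum_le_sum fun k _ =>
      mul_le_mul_of_nonneg_left (L1norm_mconvPow_le hφ n k j) (L1norm_nonneg _)

end MatrixConvolutionPower

lemma exists_tendsto_integral_norm_sum_sub {α E : Type*} [MeasurableSpace α] {μ : Measure α}
    [NormedAddCommGroup E] [CompleteSpace E] {u : ℕ → α → E} (hu : ∀ n, Integrable (u n) μ)
    (hs : Summable fun n => ∫ x, ‖u n x‖ ∂μ) :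
    ∃ g : α → E, Tendsto (fun N => ∫ x, ‖∑ n ∈ Finset.range N, u n x - g x‖ ∂μ) atTop (𝓝 0) := by
  let F n := (hu n).toL1 (u n)
  have hF : Summable F := .of_norm (by simpa only [F, L1.norm_of_fun_eq_integral_norm] using hs)
  refine ⟨⇑(∑' n, F n), (tendsto_iff_dist_tendsto_zero.1 hF.tendsto_sum_tsum_nat).congr fun N => ?_⟩
  rw [L1.dist_eq_integral_dist]
  refine integral_congr_ae ?_
  filter_upwards [Lp.coeFn_fun_finsetSum (Finset.range N) F,
    ae_all_iff.2 fun n => (hu n).coeFn_toL1] with x hsum hFn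
  rw [dist_eq_norm, hsum, Finset.sum_congr rfl fun n _ => hFn n]

lemma summable_norm_pow_of_spectralRadius_lt_one {A : Type*} [NormedRing A] [NormedAlgebra ℂ A]
    [CompleteSpace A] {a : A} (ha : spectralRadius ℂ a < 1) : Summable fun n => ‖a ^ n‖ := by
  obtain ⟨r, hρr, hr1⟩ := ENNReal.lt_iff_exists_nnreal_btwn.1 ha
  refine .of_norm_bounded_eventually_nat
    (summable_geometric_of_lt_one r.coe_nonneg (by exact_mod_cast hr1)) ?_
  filter_upwards [(spectrum.pow_norm_pow_one_div_tendsto_nhds_spectralRadius a).eventually_lt_const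
    hρr, eventually_ne_atTop 0] with n hn hn0
  rw [ENNReal.ofReal_lt_coe_iff (by positivity), one_div] at hn
  rw [norm_norm, ← Real.rpow_inv_natCast_pow (norm_nonneg (a ^ n)) hn0]
  exact pow_le_pow_left₀ (by positivity) hn.le n

lemma spectralRadius_map_ofReal_le_specRad {ι : Type*} [Fintype ι] [DecidableEq ι]
    (A : Matrix ι ι ℝ) : spectralRadius ℂ (A.map Complex.ofReal) ≤ ENNReal.ofReal (specRad A) :=
  iSup₂_le fun z hz => by
    rw [← ENNReal.ofReal_coe_nnreal, coe_nnnorm]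
    exact ENNReal.ofReal_le_ofReal
      (le_csSup ((Matrix.finite_spectrum _).image _).bddAbove ⟨z, hz, rfl⟩)

lemma summable_pow_apply_of_specRad_lt_one {ι : Type*} [Fintype ι] [DecidableEq ι]
    {A : Matrix ι ι ℝ} (hA : specRad A < 1) (i j : ι) : Summable fun n => (A ^ n) i j := by
  let _ := Matrix.linftyOpNormedRing (n := ι) (α := ℂ)
  let _ := Matrix.linftyOpNormedAlgebra (R := ℂ) (n := ι) (α := ℂ)
  have hsum : Summable fun n => A.map Complex.ofReal ^ n :=
    .of_norm <| summable_norm_pow_of_spectralRadius_lt_one <|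
      (spectralRadius_map_ofReal_le_specRad A).trans_lt (ENNReal.ofReal_lt_one.2 hA)
  refine (Complex.reCLM.summable (Pi.summable.1 (Pi.summable.1 hsum i) j)).congr fun n => ?_
  rw [show A.map Complex.ofReal = A.map Complex.ofRealHom from rfl, ← Matrix.map_pow]
  simp

-- The ascriptions on rectangular products keep the `CStarMatrix` `HMul` default instance out.
lemma Matrix.mul_pow_succ_eq_mul_pow_mul {m n R : Type*} [Fintype m] [DecidableEq m] [Fintype n]
    [DecidableEq n] [Semiring R] (P : Matrix m n R) (Q : Matrix n m R) :
    ∀ k, (P * Q : Matrix m m R) ^ (k + 1) = P * (Q * P : Matrix n n R) ^ k * Q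
  | 0 => by simp
  | k + 1 => by
    rw [pow_succ, Matrix.mul_pow_succ_eq_mul_pow_mul P Q k, pow_succ]
    simp only [Matrix.mul_assoc]

lemma summable_mul_mul_apply {l m n o R : Type*} [Fintype m] [Fintype n] [Semiring R]
    [TopologicalSpace R] [IsTopologicalSemiring R] {X : ℕ → Matrix m n R}
    (hX : ∀ a b, Summable fun k => X k a b) (P : Matrix l m R) (Q : Matrix n o R) (i : l) (j : o) :
    Summable fun k => (P * X k * Q : Matrix l o R) i j := by
  simp only [Matrix.mul_apply, Finset.sum_mul]
  exact summable_sum fun b _ => summable_sum fun a _ => ((hX a b).mul_left (P i a)).mul_right _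

lemma Matrix.pow_succ_eq_toCols₁_mul_pow_mul {ι κ R : Type*} [Fintype ι] [DecidableEq ι]
    [Fintype κ] [DecidableEq κ] [Semiring R] {D : Matrix (ι ⊕ κ) (ι ⊕ κ) R}
    (hD : ∀ i k, D i (.inr k) = 0) (n : ℕ) :
    D ^ (n + 1) = D.toCols₁ * D.toBlocks₁₁ ^ n * (fromCols 1 0 : Matrix ι (ι ⊕ κ) R) := by
  have hfac : D.toCols₁ * (fromCols 1 0 : Matrix ι (ι ⊕ κ) R) = D := by
    ext i (k | k) <;> simp [Matrix.mul_fromCols, hD]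
  have hblock : (fromCols 1 0 : Matrix ι (ι ⊕ κ) R) * D.toCols₁ = D.toBlocks₁₁ := by
    ext a b
    simp [Matrix.mul_apply, Fintype.sum_sum_type, one_apply, toBlocks₁₁]
  rw [← hblock, ← Matrix.mul_pow_succ_eq_mul_pow_mul, hfac]

lemma summable_pow_succ_apply_of_specRad_toBlocks₁₁_lt_one {ι κ : Type*} [Fintype ι]
    [DecidableEq ι] [Fintype κ] [DecidableEq κ] {D : Matrix (ι ⊕ κ) (ι ⊕ κ) ℝ}
    (hD : ∀ i k, D i (.inr k) = 0) (hA : specRad D.toBlocks₁₁ < 1) (i j : ι ⊕ κ) :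
    Summable fun n => (D ^ (n + 1)) i j := by
  simpa only [Matrix.pow_succ_eq_toCols₁_mul_pow_mul hD] using
    summable_mul_mul_apply (summable_pow_apply_of_specRad_lt_one hA) _ _ i j

theorem stmt7_general (e m : ℕ) (α : Matrix (Fin e ⊕ Fin m) (Fin e ⊕ Fin m) ℝ)
    (f : (Fin e ⊕ Fin m) → (Fin e ⊕ Fin m) → ℝ → ℝ)
    (hα : ∀ i j, 0 ≤ α i j)
    (hf0 : ∀ i j t, 0 ≤ f i j t)
    (hfi : ∀ i j, IntegrableOn (f i j) (Set.Ioi 0))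
    (hf1 : ∀ i j, ∫ t in Set.Ioi (0:ℝ), f i j t = 1)
    (φE : Matrix (Fin e ⊕ Fin m) (Fin e ⊕ Fin m) (ℝ → ℝ))
    (hφEl : ∀ i k, φE i (Sum.inl k) = fun t => α i (Sum.inl k) * f i (Sum.inl k) t)
    (hφEr : ∀ i k, φE i (Sum.inr k) = 0)
    (hspec : specRad (Matrix.of fun i j => α (Sum.inl i) (Sum.inl j)) < 1) :
    ∀ i j, Summable (fun n : ℕ => L1norm (mconvPow φE n i j)) ∧
      ∃ g : ℝ → ℝ,
        Tendsto (fun N : ℕ =>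
            L1norm (fun t => (∑ n ∈ Finset.range N, mconvPow φE n i j t) - g t))
          atTop (nhds 0) := by
  have hφ : ∀ i j, IntegrableOn (φE i j) (Ioi 0)
    | i, .inl k => hφEl i k ▸ (hfi i _).const_mul _
    | i, .inr k => hφEr i k ▸ integrableOn_zero
  have hmass_inl (i k) : L1norm (φE i (.inl k)) = α i (.inl k) :=
    calc L1norm (φE i (.inl k)) = ∫ t in Ioi 0, α i (.inl k) * f i (.inl k) t := by
          rw [hφEl, L1norm]
          exact setIntegral_congr_fun measurableSet_Ioi fun t _ =>
            abs_of_nonneg (mul_nonneg (hα _ _) (hf0 _ _ t))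
      _ = α i (.inl k) := by rw [integral_const_mul, hf1, mul_one]
  have hmass_inr (i k) : (φE.map L1norm) i (.inr k) = 0 := by simp [hφEr, L1norm]
  have hblock : (φE.map L1norm).toBlocks₁₁ = of fun a b => α (.inl a) (.inl b) := by
    ext a b
    simp [toBlocks₁₁, hmass_inl]
  intro i j
  have hsum : Summable fun n => L1norm (mconvPow φE n i j) :=
    .of_nonneg_of_le (fun n => L1norm_nonneg _) (fun n => L1norm_mconvPow_le hφ n i j)
      (summable_pow_succ_apply_of_specRad_toBlocks₁₁_lt_one hmass_inr (hblock ▸ hspec) i j)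
  exact ⟨hsum, by
    simpa [L1norm] using exists_tendsto_integral_norm_sum_sub (integrableOn_mconvPow hφ · i j) hsum⟩

theorem stmt7 (e m : ℕ) (α : Matrix (Fin e ⊕ Fin m) (Fin e ⊕ Fin m) ℝ)
    (f : (Fin e ⊕ Fin m) → (Fin e ⊕ Fin m) → ℝ → ℝ)
    (hα : ∀ i j, 0 ≤ α i j)
    (hf0 : ∀ i j t, 0 ≤ f i j t)
    (hfm : ∀ i j, Measurable (f i j))
    (hfi : ∀ i j, IntegrableOn (f i j) (Set.Ioi 0))
    (hf1 : ∀ i j, ∫ t in Set.Ioi (0:ℝ), f i j t = 1)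
    (φE : Matrix (Fin e ⊕ Fin m) (Fin e ⊕ Fin m) (ℝ → ℝ))
    (hφEl : ∀ i k, φE i (Sum.inl k) = fun t => α i (Sum.inl k) * f i (Sum.inl k) t)
    (hφEr : ∀ i k, φE i (Sum.inr k) = 0)
    (hspec : specRad (Matrix.of fun i j => α (Sum.inl i) (Sum.inl j)) < 1) :
    ∀ i j, Summable (fun n : ℕ => L1norm (mconvPow φE n i j)) ∧
      ∃ g : ℝ → ℝ,
        Tendsto (fun N : ℕ =>
            L1norm (fun t => (∑ n ∈ Finset.range N, mconvPow φE n i j t) - g t))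
          atTop (nhds 0) :=
  stmt7_general e m α f hα hf0 hfi hf1 φE hφEl hφEr hspec
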